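/- arXiv:1001.1197 — 6 statements merged into one kernel-verified Lean document; each statement's English description precedes it below -/
import Mathlib

section
/- Let Z, T be finite sets, Q : T → (Z → ℝ>0) a conditional probability kernel with strictly positive entries, and P a probability distribution on T. Define φ(s) = ln Σ_{z} (Σ_{t} P(t) Q(z|t)^{1/(1-s)})^{1-s}. Then the function s ↦ φ(s) is convex on [0, 1/2]. -/
/-!
With `ρ = 1 - s`, `φ` is the logarithm of `G ρ = ∑ z, (∑ t, P t * Q t z ^ (1 / ρ)) ^ ρ`
(`gallagerSum P Q ρ`), so it suffices that `G` is log-convex on `ρ > 0`. For `ρ = a ρ₁ + b ρ₂`, the exponent `1 / ρ` is the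
convex combination of `1 / ρ₁` and `1 / ρ₂` with weights `a ρ₁ / ρ` and `b ρ₂ / ρ`; Hölder's
inequality over `t` (log-convexity of moments) then bounds each term of `G ρ` by
`(term of G ρ₁) ^ a * (term of G ρ₂) ^ b`, and Hölder's inequality over `z` gives
`G ρ ≤ G ρ₁ ^ a * G ρ₂ ^ b`.
-/

open Finset Real

theorem sum_rpow_mul_rpow_le {ι : Type*} (s : Finset ι) {f g : ι → ℝ} (hf : ∀ i ∈ s, 0 ≤ f i)
    (hg : ∀ i ∈ s, 0 ≤ g i) {a b : ℝ} (ha : 0 < a) (hb : 0 < b) (hab : a + b = 1) :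
    ∑ i ∈ s, f i ^ a * g i ^ b ≤ (∑ i ∈ s, f i) ^ a * (∑ i ∈ s, g i) ^ b := by
  have holder := inner_le_Lp_mul_Lq_of_nonneg s (holderConjugate_one_div ha hb hab)
    (fun i hi => rpow_nonneg (hf i hi) a) (fun i hi => rpow_nonneg (hg i hi) b)
  have rpow_rpow_inv : ∀ {x c : ℝ}, 0 ≤ x → 0 < c → (x ^ c) ^ (1 / c) = x := fun hx hc => by
    rw [← rpow_mul hx, mul_one_div_cancel hc.ne', rpow_one]
  simpa only [one_div_one_div, sum_congr rfl fun i hi => rpow_rpow_inv (hf i hi) ha,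
    sum_congr rfl fun i hi => rpow_rpow_inv (hg i hi) hb] using holder

theorem sum_mul_rpow_le_rpow_mul_rpow {ι : Type*} (s : Finset ι) {c x : ι → ℝ}
    (hc : ∀ i ∈ s, 0 ≤ c i) (hx : ∀ i ∈ s, 0 < x i) (u v : ℝ) {a b : ℝ} (ha : 0 < a)
    (hb : 0 < b) (hab : a + b = 1) :
    ∑ i ∈ s, c i * x i ^ (a * u + b * v) ≤
      (∑ i ∈ s, c i * x i ^ u) ^ a * (∑ i ∈ s, c i * x i ^ v) ^ b := by
  refine le_of_eq_of_le (sum_congr rfl fun i hi => ?_) (sum_rpow_mul_rpow_le s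
    (fun i hi => mul_nonneg (hc i hi) (rpow_nonneg (hx i hi).le u))
    (fun i hi => mul_nonneg (hc i hi) (rpow_nonneg (hx i hi).le v)) ha hb hab)
  have hxi := hx i hi
  rw [mul_rpow (hc i hi) (rpow_nonneg hxi.le _), mul_rpow (hc i hi) (rpow_nonneg hxi.le _),
    mul_mul_mul_comm, ← rpow_add' (hc i hi) (by rw [hab]; exact one_ne_zero), hab, rpow_one,
    ← rpow_mul hxi.le, ← rpow_mul hxi.le, ← rpow_add hxi, mul_comm u, mul_comm v]

section

variable {Z T : Type*} [Fintype Z] [Fintype T]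

noncomputable def gallagerSum (P : T → ℝ) (Q : T → Z → ℝ) (ρ : ℝ) : ℝ :=
  ∑ z, (∑ t, P t * Q t z ^ (1 / ρ)) ^ ρ

theorem gallagerSum_le_rpow_mul_rpow {P : T → ℝ} {Q : T → Z → ℝ} (hP : ∀ t, 0 ≤ P t)
    (hQ : ∀ t z, 0 < Q t z) {ρ₁ ρ₂ : ℝ} (hρ₁ : 0 < ρ₁) (hρ₂ : 0 < ρ₂) {a b : ℝ} (ha : 0 < a)
    (hb : 0 < b) (hab : a + b = 1) :
    gallagerSum P Q (a * ρ₁ + b * ρ₂) ≤ gallagerSum P Q ρ₁ ^ a * gallagerSum P Q ρ₂ ^ b := by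
  set ρ := a * ρ₁ + b * ρ₂
  have hρ : 0 < ρ := by positivity
  set S : ℝ → Z → ℝ := fun u z => ∑ t, P t * Q t z ^ u
  have hS : ∀ u z, 0 ≤ S u z := fun u z =>
    sum_nonneg fun t _ => mul_nonneg (hP t) (rpow_nonneg (hQ t z).le u)
  set w₁ := a * ρ₁ / ρ
  set w₂ := b * ρ₂ / ρ
  have hw : w₁ + w₂ = 1 := by rw [← add_div, div_self hρ.ne']
  have hw₁ : w₁ * ρ = a * ρ₁ := div_mul_cancel₀ _ hρ.ne'
  have hw₂ : w₂ * ρ = b * ρ₂ := div_mul_cancel₀ _ hρ.ne'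
  have hmean : 1 / ρ = w₁ * (1 / ρ₁) + w₂ * (1 / ρ₂) := by
    simp only [w₁, w₂, ρ]
    field_simp
    linarith
  have pointwise : ∀ z, S (1 / ρ) z ^ ρ ≤ (S (1 / ρ₁) z ^ ρ₁) ^ a * (S (1 / ρ₂) z ^ ρ₂) ^ b := by
    intro z
    calc S (1 / ρ) z ^ ρ ≤ (S (1 / ρ₁) z ^ w₁ * S (1 / ρ₂) z ^ w₂) ^ ρ := by
          rw [hmean]
          exact rpow_le_rpow (hS _ z) (sum_mul_rpow_le_rpow_mul_rpow _ (fun t _ => hP t)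
            (fun t _ => hQ t z) _ _ (by positivity) (by positivity) hw) hρ.le
      _ = (S (1 / ρ₁) z ^ ρ₁) ^ a * (S (1 / ρ₂) z ^ ρ₂) ^ b := by
          rw [mul_rpow (rpow_nonneg (hS _ z) _) (rpow_nonneg (hS _ z) _), ← rpow_mul (hS _ z),
            ← rpow_mul (hS _ z), ← rpow_mul (hS _ z), ← rpow_mul (hS _ z), hw₁, hw₂,
            mul_comm ρ₁, mul_comm ρ₂]
  calc gallagerSum P Q ρ ≤ ∑ z, (S (1 / ρ₁) z ^ ρ₁) ^ a * (S (1 / ρ₂) z ^ ρ₂) ^ b :=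
        sum_le_sum fun z _ => pointwise z
    _ ≤ gallagerSum P Q ρ₁ ^ a * gallagerSum P Q ρ₂ ^ b :=
        sum_rpow_mul_rpow_le _ (fun z _ => rpow_nonneg (hS _ z) _)
          (fun z _ => rpow_nonneg (hS _ z) _) ha hb hab

theorem gallagerSum_pos [Nonempty Z] {P : T → ℝ} {Q : T → Z → ℝ} (hP : ∀ t, 0 ≤ P t)
    (hP₀ : ∃ t, 0 < P t) (hQ : ∀ t z, 0 < Q t z) (ρ : ℝ) : 0 < gallagerSum P Q ρ := by
  obtain ⟨t₀, ht₀⟩ := hP₀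
  refine sum_pos (fun z _ => rpow_pos_of_pos ?_ ρ) univ_nonempty
  exact sum_pos' (fun t _ => mul_nonneg (hP t) (rpow_nonneg (hQ t z).le _))
    ⟨t₀, mem_univ _, mul_pos ht₀ (rpow_pos_of_pos (hQ t₀ z) _)⟩

theorem convexOn_log_gallagerSum [Nonempty Z] {P : T → ℝ} {Q : T → Z → ℝ} (hP : ∀ t, 0 ≤ P t)
    (hP₀ : ∃ t, 0 < P t) (hQ : ∀ t z, 0 < Q t z) :
    ConvexOn ℝ (Set.Ioi 0) fun ρ => log (gallagerSum P Q ρ) := by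
  refine convexOn_iff_forall_pos.2 ⟨convex_Ioi 0, fun ρ₁ hρ₁ ρ₂ hρ₂ a b ha hb hab => ?_⟩
  have hpos := gallagerSum_pos hP hP₀ hQ
  calc log (gallagerSum P Q (a • ρ₁ + b • ρ₂))
      ≤ log (gallagerSum P Q ρ₁ ^ a * gallagerSum P Q ρ₂ ^ b) :=
        log_le_log (hpos _) (gallagerSum_le_rpow_mul_rpow hP hQ hρ₁ hρ₂ ha hb hab)
    _ = a • log (gallagerSum P Q ρ₁) + b • log (gallagerSum P Q ρ₂) := by
        rw [log_mul (rpow_pos_of_pos (hpos _) a).ne' (rpow_pos_of_pos (hpos _) b).ne',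
          log_rpow (hpos _), log_rpow (hpos _), smul_eq_mul, smul_eq_mul]

end

theorem gallager_phi_convex_general
    {Z T : Type*} [Fintype Z] [Fintype T] [Nonempty Z]
    (Q : T → Z → ℝ) (hQpos : ∀ t z, 0 < Q t z)
    (P : T → ℝ) (hPnn : ∀ t, 0 ≤ P t) (hPsum : ∑ t : T, P t = 1)
    (φ : ℝ → ℝ)
    (hφ : ∀ s, φ s =
      Real.log (∑ z : Z, (∑ t : T, P t * Q t z ^ ((1 : ℝ) / (1 - s))) ^ (1 - s))) :
    ConvexOn ℝ (Set.Icc (0 : ℝ) (1 / 2)) φ := by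
  have hP₀ : ∃ t, 0 < P t := by
    obtain ⟨t, -, ht⟩ := exists_lt_of_sum_lt (s := univ) (f := 0) (g := P) (by simp [hPsum])
    exact ⟨t, ht⟩
  let reflect : ℝ →ᵃ[ℝ] ℝ := AffineMap.const ℝ ℝ (1 : ℝ) - AffineMap.id ℝ ℝ
  have hconv := (convexOn_log_gallagerSum hPnn hP₀ hQpos).comp_affineMap reflect
  refine (hconv.subset (fun s hs => ?_) (convex_Icc 0 _)).congr fun s _ => (hφ s).symm
  show 0 < 1 - s
  linarith [hs.2]

/-- Convexity of the Gallager-type function φ on [0, 1/2]. -/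
theorem gallager_phi_convex
    {Z T : Type*} [Fintype Z] [Fintype T] [Nonempty Z] [Nonempty T]
    (Q : T → Z → ℝ) (hQpos : ∀ t z, 0 < Q t z) (hQsum : ∀ t, ∑ z : Z, Q t z = 1)
    (P : T → ℝ) (hPnn : ∀ t, 0 ≤ P t) (hPsum : ∑ t : T, P t = 1)
    (φ : ℝ → ℝ)
    (hφ : ∀ s, φ s =
      Real.log (∑ z : Z, (∑ t : T, P t * Q t z ^ ((1 : ℝ) / (1 - s))) ^ (1 - s))) :
    ConvexOn ℝ (Set.Icc (0 : ℝ) (1 / 2)) φ :=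
  gallager_phi_convex_general Q hQpos P hPnn hPsum φ hφ
end

section
/- Let Z, T be finite sets, Q : T → (Z → ℝ>0) a strictly positive conditional probability kernel, and P a probability distribution on T. Define φ(s) = ln Σ_z (Σ_t P(t) Q(z|t)^{1/(1-s)})^{1-s} for s ∈ [0,1). Then the right derivative of φ at s = 0 equals the mutual information I(P, Q) = Σ_{t,z} P(t) Q(z|t) ln( Q(z|t) / Q_Z(z) ), where Q_Z(z) = Σ_t P(t) Q(z|t). -/
/-!
Write `φ(s) = log F(s)` with `F(s) = ∑_z B_z(s) ^ (1 - s)` and `B_z(s) = ∑_t P(t) Q(z|t) ^ (1/(1-s))`.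
At `s = 0` we have `B_z(0) = Q_Z(z)` and `F(0) = ∑_z Q_Z(z) = 1`, so `φ'(0) = F'(0)`.
Differentiating the exponents gives `B_z'(0) = ∑_t P(t) Q(z|t) log Q(z|t)` and
`F'(0) = ∑_z (B_z'(0) - Q_Z(z) log Q_Z(z))`, which is the mutual information after
splitting `log (Q(z|t) / Q_Z(z))`. In fact `φ` is differentiable at `0` in the two-sided sense.
-/

open Finset Real

lemma hasDerivAt_rpow_one_div_one_sub {a : ℝ} (ha : 0 < a) :
    HasDerivAt (fun s : ℝ => a ^ (1 / (1 - s))) (a * log a) 0 := by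
  have h : HasDerivAt (fun s : ℝ => 1 / (1 - s)) 1 0 := by
    simpa using ((hasDerivAt_id (0 : ℝ)).const_sub 1).fun_inv (by norm_num)
  simpa using (hasDerivAt_const 0 a).rpow h ha

lemma HasDerivAt.rpow_one_sub {g : ℝ → ℝ} {g' : ℝ} (hg : HasDerivAt g g' 0) (hpos : 0 < g 0) :
    HasDerivAt (fun s => g s ^ (1 - s)) (g' - g 0 * Real.log (g 0)) 0 := by
  have := hg.rpow ((hasDerivAt_id (0 : ℝ)).const_sub 1) hpos
  simpa [sub_eq_add_neg] using this

lemma sum_mul_pos_of_sum_eq_one {ι : Type*} {s : Finset ι} {w f : ι → ℝ} (hw : ∀ i ∈ s, 0 ≤ w i)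
    (hsum : ∑ i ∈ s, w i = 1) (hf : ∀ i ∈ s, 0 < f i) : 0 < ∑ i ∈ s, w i * f i := by
  obtain ⟨i, hi, hwi⟩ := exists_ne_zero_of_sum_ne_zero (hsum ▸ one_ne_zero)
  exact sum_pos' (fun j hj => mul_nonneg (hw j hj) (hf j hj).le)
    ⟨i, hi, mul_pos ((hw i hi).lt_of_ne' hwi) (hf i hi)⟩

lemma sum_sum_mul_eq_one {Z T : Type*} [Fintype Z] [Fintype T] {Q : T → Z → ℝ}
    (hQsum : ∀ t, ∑ z, Q t z = 1) {P : T → ℝ} (hPsum : ∑ t, P t = 1) :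
    ∑ z, ∑ t, P t * Q t z = 1 := by
  rw [sum_comm]
  simp [← mul_sum, hQsum, hPsum]

lemma sum_sum_mul_log_div_marginal {Z T : Type*} [Fintype Z] [Fintype T] {Q : T → Z → ℝ}
    (hQpos : ∀ t z, 0 < Q t z) {P : T → ℝ} (hmarg : ∀ z, 0 < ∑ t, P t * Q t z) :
    ∑ t, ∑ z, P t * Q t z * Real.log (Q t z / ∑ t', P t' * Q t' z) =
      ∑ z, (∑ t, P t * (Q t z * Real.log (Q t z)) -
        (∑ t, P t * Q t z) * Real.log (∑ t, P t * Q t z)) := by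
  rw [sum_comm]
  refine sum_congr rfl fun z _ => ?_
  simp only [Real.log_div (hQpos _ z).ne' (hmarg z).ne', mul_sub, sum_sub_distrib, sum_mul, mul_assoc]

theorem gallager_phi_deriv_at_zero_general
    {Z T : Type*} [Fintype Z] [Fintype T]
    (Q : T → Z → ℝ) (hQpos : ∀ t z, 0 < Q t z) (hQsum : ∀ t, ∑ z : Z, Q t z = 1)
    (P : T → ℝ) (hPnn : ∀ t, 0 ≤ P t) (hPsum : ∑ t : T, P t = 1)
    (φ : ℝ → ℝ)
    (hφ : ∀ s, φ s =
      Real.log (∑ z : Z, (∑ t : T, P t * Q t z ^ ((1 : ℝ) / (1 - s))) ^ (1 - s)))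
    (I : ℝ)
    (hI : I = ∑ t : T, ∑ z : Z,
      P t * Q t z * Real.log (Q t z / ∑ t' : T, P t' * Q t' z)) :
    HasDerivWithinAt φ I (Set.Ici (0 : ℝ)) 0 := by
  have hmarg : ∀ z, 0 < ∑ t, P t * Q t z := fun z =>
    sum_mul_pos_of_sum_eq_one (fun t _ => hPnn t) hPsum fun t _ => hQpos t z
  have hB0 : ∀ z, ∑ t, P t * Q t z ^ ((1 : ℝ) / (1 - 0)) = ∑ t, P t * Q t z := by simp
  have hB : ∀ z, HasDerivAt (fun s => ∑ t, P t * Q t z ^ ((1 : ℝ) / (1 - s)))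
      (∑ t, P t * (Q t z * Real.log (Q t z))) 0 := fun z =>
    HasDerivAt.fun_sum fun t _ => (hasDerivAt_rpow_one_div_one_sub (hQpos t z)).const_mul (P t)
  have hF := HasDerivAt.fun_sum fun z (_ : z ∈ univ) =>
    (hB z).rpow_one_sub (by rw [hB0]; exact hmarg z)
  have hF0 : ∑ z, (∑ t, P t * Q t z ^ ((1 : ℝ) / (1 - 0))) ^ (1 - (0 : ℝ)) = 1 := by
    simpa using sum_sum_mul_eq_one hQsum hPsum
  have hlogF := hF.log (by rw [hF0]; exact one_ne_zero)
  rw [hF0, div_one] at hlogF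
  rw [funext hφ, hI, sum_sum_mul_log_div_marginal hQpos hmarg]
  simpa only [hB0] using hlogF.hasDerivWithinAt

/-- The right derivative of the Gallager-type function φ at 0 is the mutual
information I(P, Q). -/
theorem gallager_phi_deriv_at_zero
    {Z T : Type*} [Fintype Z] [Fintype T] [Nonempty Z] [Nonempty T]
    (Q : T → Z → ℝ) (hQpos : ∀ t z, 0 < Q t z) (hQsum : ∀ t, ∑ z : Z, Q t z = 1)
    (P : T → ℝ) (hPnn : ∀ t, 0 ≤ P t) (hPsum : ∑ t : T, P t = 1)
    (φ : ℝ → ℝ)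
    (hφ : ∀ s, φ s =
      Real.log (∑ z : Z, (∑ t : T, P t * Q t z ^ ((1 : ℝ) / (1 - s))) ^ (1 - s)))
    (I : ℝ)
    (hI : I = ∑ t : T, ∑ z : Z,
      P t * Q t z * Real.log (Q t z / ∑ t' : T, P t' * Q t' z)) :
    HasDerivWithinAt φ I (Set.Ici (0 : ℝ)) 0 :=
  gallager_phi_deriv_at_zero_general Q hQpos hQsum P hPnn hPsum φ hφ I hI
end

section
/- Let T be a finite set, n a positive integer, Q a conditional probability kernel from T to a finite set Z, and let Qⁿ denote the n-fold memoryless extension from Tⁿ to Zⁿ. Let Uniform(T) and Uniform(Tⁿ) denote uniform distributions. Then ψ(s, Qⁿ, Uniform(Tⁿ)) = n · ψ(s, Q, Uniform(T)) for all s ∈ (0,1], where ψ(s, Q, P) = ln Σ_z (Σ_t P(t) Q(z|t)^{1+s}) / Q_Z(z)^s with Q_Z(z) = Σ_t P(t)Q(z|t), assuming Q_Z is strictly positive. -/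
open Finset

/-- Additivity of ψ under the n-fold memoryless extension with uniform input. -/
theorem psi_additive_iid
    {T Z : Type*} [Fintype T] [Fintype Z] [Nonempty T] [Nonempty Z]
    (n : ℕ) (hn : 0 < n)
    (Q : T → Z → ℝ) (hQnn : ∀ t z, 0 ≤ Q t z) (hQsum : ∀ t, ∑ z : Z, Q t z = 1)
    (hpos : ∀ z : Z, 0 < ∑ t : T, (1 / Fintype.card T : ℝ) * Q t z)
    (s : ℝ) (hs0 : 0 < s) (hs1 : s ≤ 1) :
    Real.log (∑ zv : Fin n → Z,
        (∑ tv : Fin n → T,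
            (1 / (Fintype.card T : ℝ) ^ n) * (∏ i, Q (tv i) (zv i)) ^ (1 + s)) /
          (∑ tv : Fin n → T,
            (1 / (Fintype.card T : ℝ) ^ n) * ∏ i, Q (tv i) (zv i)) ^ s)
      = n * Real.log (∑ z : Z,
          (∑ t : T, (1 / Fintype.card T : ℝ) * Q t z ^ (1 + s)) /
            (∑ t : T, (1 / Fintype.card T : ℝ) * Q t z) ^ s) := by
  classical
  set c : ℝ := 1 / Fintype.card T with hc
  set A : Z → ℝ := fun z => ∑ t : T, c * Q t z ^ (1 + s) with hA
  set B : Z → ℝ := fun z => ∑ t : T, c * Q t z with hB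
  have hBpos : ∀ z, 0 < B z := hpos
  -- numerator factorization
  have hnum : ∀ zv : Fin n → Z,
      (∑ tv : Fin n → T, (1 / (Fintype.card T : ℝ) ^ n) * (∏ i, Q (tv i) (zv i)) ^ (1 + s))
        = ∏ i, A (zv i) := by
    intro zv
    have : ∀ tv : Fin n → T,
        (1 / (Fintype.card T : ℝ) ^ n) * (∏ i, Q (tv i) (zv i)) ^ (1 + s)
          = ∏ i, c * Q (tv i) (zv i) ^ (1 + s) := by
      intro tv
      rw [Finset.prod_mul_distrib, ← Real.finset_prod_rpow _ _ (fun i _ => hQnn _ _) (1 + s),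
        Finset.prod_const, hc]
      ring_nf
      simp [Finset.card_univ]
    simp only [this]
    exact (Fintype.prod_sum (fun i t => c * Q t (zv i) ^ (1 + s))).symm
  have hden : ∀ zv : Fin n → Z,
      (∑ tv : Fin n → T, (1 / (Fintype.card T : ℝ) ^ n) * ∏ i, Q (tv i) (zv i))
        = ∏ i, B (zv i) := by
    intro zv
    have : ∀ tv : Fin n → T,
        (1 / (Fintype.card T : ℝ) ^ n) * ∏ i, Q (tv i) (zv i)
          = ∏ i, c * Q (tv i) (zv i) := by
      intro tv
      rw [Finset.prod_mul_distrib, Finset.prod_const, hc]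
      ring_nf
      simp [Finset.card_univ]
    simp only [this]
    exact (Fintype.prod_sum (fun i t => c * Q t (zv i))).symm
  have key : (∑ zv : Fin n → Z,
      (∑ tv : Fin n → T, (1 / (Fintype.card T : ℝ) ^ n) * (∏ i, Q (tv i) (zv i)) ^ (1 + s)) /
        (∑ tv : Fin n → T, (1 / (Fintype.card T : ℝ) ^ n) * ∏ i, Q (tv i) (zv i)) ^ s)
      = (∑ z : Z, A z / B z ^ s) ^ n := by
    rw [Fintype.sum_pow (fun z => A z / B z ^ s) n]
    refine Finset.sum_congr rfl fun zv _ => ?_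
    rw [hnum zv, hden zv,
      ← Real.finset_prod_rpow _ _ (fun i _ => (hBpos (zv i)).le) s,
      ← Finset.prod_div_distrib]
  rw [key, Real.log_pow]
end

section
/- Let T, Z be finite sets and Q a conditional probability kernel from T to Z with strictly positive output distribution under uniform input. Define ψ(s) = ln Σ_z (Σ_t (1/|T|) Q(z|t)^{1+s}) / Q_Z(z)^s where Q_Z(z) = Σ_t (1/|T|) Q(z|t). Then lim_{s→0+} ψ(s)/s = I(Uniform(T), Q), the mutual information between a uniform input on T and the output of Q. -/
/-!
Write `ψ = log ∘ F` with `F s = ∑_z (∑_t Q(z|t)^{1+s} / |T|) / Q_Z(z)^s`. Since `Q` is stochastic,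
`F 0 = ∑_z Q_Z(z) = 1`, so `ψ 0 = 0` and `ψ(s)/s` is a difference quotient of `ψ` at `0`. Its limit
is `ψ'(0) = F'(0)`, and differentiating `q^{1+s} / p^s` at `s = 0` gives `q log q - q log p`,
which summed over `t` and `z` is the mutual information.
-/

open Finset Filter

section Derivatives

open Real

theorem hasDerivAt_const_rpow_of_nonneg {a x : ℝ} (ha : 0 ≤ a) (hx : x ≠ 0) :
    HasDerivAt (fun y : ℝ => a ^ y) (a ^ x * log a) x := by
  rcases ha.eq_or_lt with rfl | ha
  · have hzero : (fun y : ℝ => (0 : ℝ) ^ y) =ᶠ[nhds x] fun _ => 0 := by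
      filter_upwards [continuousAt_id.eventually_ne hx] with y hy
      exact zero_rpow hy
    simpa using (hasDerivAt_const x (0 : ℝ)).congr_of_eventuallyEq hzero
  · exact (hasStrictDerivAt_const_rpow ha x).hasDerivAt

theorem hasDerivAt_rpow_one_add_at_zero {a : ℝ} (ha : 0 ≤ a) :
    HasDerivAt (fun s : ℝ => a ^ (1 + s)) (a * log a) 0 := by
  have h := (hasDerivAt_const_rpow_of_nonneg ha (x := 1 + 0) (by norm_num)).comp (0 : ℝ)
    ((hasDerivAt_id (0 : ℝ)).const_add 1)
  simpa [Function.comp_def] using h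

theorem hasDerivAt_tilted_ratio_at_zero {T : Type*} [Fintype T] (w q : T → ℝ)
    (hq : ∀ t, 0 ≤ q t) (hp : 0 < ∑ t, w t * q t) :
    HasDerivAt (fun s : ℝ => (∑ t, w t * q t ^ (1 + s)) / (∑ t, w t * q t) ^ s)
      (∑ t, w t * q t * log (q t / ∑ t, w t * q t)) 0 := by
  set p := ∑ t, w t * q t
  have hnum : HasDerivAt (fun s : ℝ => ∑ t, w t * q t ^ (1 + s)) (∑ t, w t * (q t * log (q t))) 0 :=
    HasDerivAt.fun_sum fun t _ => (hasDerivAt_rpow_one_add_at_zero (hq t)).const_mul (w t)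
  have hden : HasDerivAt (fun s : ℝ => p ^ s) (log p) 0 := by
    simpa using (hasStrictDerivAt_const_rpow hp 0).hasDerivAt
  refine (hnum.div hden (by simp)).congr_deriv ?_
  have hlog : ∀ t, w t * q t * log (q t / p) = w t * (q t * log (q t)) - w t * q t * log p := by
    intro t
    rcases eq_or_ne (q t) 0 with h0 | h0
    · simp [h0]
    · rw [log_div h0 hp.ne']; ring
  simp only [add_zero, rpow_one, rpow_zero, one_pow, div_one, mul_one, hlog, sum_sub_distrib,
    ← sum_mul]

theorem hasDerivAt_sum_tilted_ratio_at_zero {T Z : Type*} [Fintype T] [Fintype Z]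
    (w : T → ℝ) (Q : T → Z → ℝ) (hQ : ∀ t z, 0 ≤ Q t z) (hQZ : ∀ z, 0 < ∑ t, w t * Q t z) :
    HasDerivAt (fun s : ℝ => ∑ z, (∑ t, w t * Q t z ^ (1 + s)) / (∑ t, w t * Q t z) ^ s)
      (∑ t, ∑ z, w t * Q t z * log (Q t z / ∑ t, w t * Q t z)) 0 := by
  rw [sum_comm]
  exact HasDerivAt.fun_sum fun z _ =>
    hasDerivAt_tilted_ratio_at_zero w (Q · z) (hQ · z) (hQZ z)

end Derivatives

theorem sum_output_eq_one_of_uniform {T Z : Type*} [Fintype T] [Fintype Z] [Nonempty T]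
    (Q : T → Z → ℝ) (hQ : ∀ t, ∑ z, Q t z = 1) :
    ∑ z, ∑ t, (1 / Fintype.card T : ℝ) * Q t z = 1 := by
  rw [sum_comm]
  simp [← mul_sum, hQ]

theorem tendsto_div_of_hasDerivAt_zero {f : ℝ → ℝ} {L : ℝ} (hf : HasDerivAt f L 0)
    (hf0 : f 0 = 0) : Tendsto (fun s => f s / s) (nhdsWithin 0 (Set.Ioi 0)) (nhds L) := by
  simpa [hf0, div_eq_inv_mul] using hf.tendsto_slope_zero_right

theorem psi_div_s_tendsto_mutualInfo_general
    {T Z : Type*} [Fintype T] [Fintype Z] [Nonempty T]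
    (Q : T → Z → ℝ) (hQnn : ∀ t z, 0 ≤ Q t z) (hQsum : ∀ t, ∑ z : Z, Q t z = 1)
    (QZ : Z → ℝ) (hQZ : ∀ z, QZ z = ∑ t : T, (1 / Fintype.card T : ℝ) * Q t z)
    (hpos : ∀ z, 0 < QZ z)
    (ψ : ℝ → ℝ)
    (hψ : ∀ s, ψ s =
      Real.log (∑ z : Z,
        (∑ t : T, (1 / Fintype.card T : ℝ) * Q t z ^ (1 + s)) / QZ z ^ s))
    (I : ℝ)
    (hI : I = ∑ t : T, ∑ z : Z,
      (1 / Fintype.card T : ℝ) * Q t z * Real.log (Q t z / QZ z)) :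
    Tendsto (fun s => ψ s / s) (nhdsWithin 0 (Set.Ioi 0)) (nhds I) := by
  simp only [hQZ] at hψ hI hpos
  set F : ℝ → ℝ := fun s => ∑ z : Z,
    (∑ t : T, (1 / Fintype.card T : ℝ) * Q t z ^ (1 + s)) /
      (∑ t : T, (1 / Fintype.card T : ℝ) * Q t z) ^ s
  have hF0 : F 0 = 1 := by
    simpa [F] using sum_output_eq_one_of_uniform Q hQsum
  have hψF : ψ = fun s => Real.log (F s) := funext hψ
  have hF : HasDerivAt F I 0 := hI ▸ hasDerivAt_sum_tilted_ratio_at_zero _ Q hQnn hpos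
  have hψ' : HasDerivAt ψ I 0 := by
    simpa [hψF, hF0] using hF.log (by simp [hF0])
  exact tendsto_div_of_hasDerivAt_zero hψ' (by simp [hψF, hF0])

/-- lim_{s→0+} ψ(s)/s equals the mutual information with uniform input. -/
theorem psi_div_s_tendsto_mutualInfo
    {T Z : Type*} [Fintype T] [Fintype Z] [Nonempty T] [Nonempty Z]
    (Q : T → Z → ℝ) (hQnn : ∀ t z, 0 ≤ Q t z) (hQsum : ∀ t, ∑ z : Z, Q t z = 1)
    (QZ : Z → ℝ) (hQZ : ∀ z, QZ z = ∑ t : T, (1 / Fintype.card T : ℝ) * Q t z)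
    (hpos : ∀ z, 0 < QZ z)
    (ψ : ℝ → ℝ)
    (hψ : ∀ s, ψ s =
      Real.log (∑ z : Z,
        (∑ t : T, (1 / Fintype.card T : ℝ) * Q t z ^ (1 + s)) / QZ z ^ s))
    (I : ℝ)
    (hI : I = ∑ t : T, ∑ z : Z,
      (1 / Fintype.card T : ℝ) * Q t z * Real.log (Q t z / QZ z)) :
    Tendsto (fun s => ψ s / s) (nhdsWithin 0 (Set.Ioi 0)) (nhds I) :=
  psi_div_s_tendsto_mutualInfo_general Q hQnn hQsum QZ hQZ hpos ψ hψ I hI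
end

section
/- Let Z be a finite set, M a nonempty finite set, and for each m ∈ M let R(·|m) be a probability distribution on Z. Let R_Z(z) = (1/|M|) Σ_m R(z|m). Define φ̄(s) = ln Σ_z ( (1/|M|) Σ_m R(z|m)^{1/(1-s)} )^{1-s}. Then for 0 < s ≤ 1/2, s · I ≤ φ̄(s), where I = Σ_{m,z} (1/|M|) R(z|m) ln( R(z|m)/R_Z(z) ) is the mutual information between a uniform M-valued input and the output through R (with the convention 0 ln 0 = 0 and assuming all R(z|m) > 0). -/
open Finset

/-- Jensen's inequality for the logarithm: weighted average of logs is at most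
log of the weighted average. -/
lemma jensen_log_aux {ι : Type*} [Fintype ι] (w x : ι → ℝ)
    (hw : ∀ i, 0 < w i) (hw1 : ∑ i, w i = 1) (hx : ∀ i, 0 < x i) :
    ∑ i, w i * Real.log (x i) ≤ Real.log (∑ i, w i * x i) := by
  have hne : Nonempty ι := by
    by_contra h
    rw [not_nonempty_iff] at h
    simp [Finset.univ_eq_empty] at hw1
  set X := ∑ i, w i * x i with hX
  have hXpos : 0 < X :=
    Finset.sum_pos (fun i _ => mul_pos (hw i) (hx i)) univ_nonempty
  have h1 : ∀ i, Real.log (x i) ≤ x i / X - 1 + Real.log X := by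
    intro i
    have h2 := Real.log_le_sub_one_of_pos (div_pos (hx i) hXpos)
    rw [Real.log_div (hx i).ne' hXpos.ne'] at h2
    linarith
  calc ∑ i, w i * Real.log (x i)
      ≤ ∑ i, w i * (x i / X - 1 + Real.log X) :=
        Finset.sum_le_sum fun i _ => mul_le_mul_of_nonneg_left (h1 i) (hw i).le
    _ = ∑ i, (w i * x i / X - w i + w i * Real.log X) := by
        apply Finset.sum_congr rfl; intro i _; ring
    _ = (∑ i, w i * x i) / X - (∑ i, w i) + (∑ i, w i) * Real.log X := by
        rw [Finset.sum_add_distrib, Finset.sum_sub_distrib, Finset.sum_div,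
          Finset.sum_mul]
    _ = Real.log X := by
        rw [hw1, ← hX, div_self hXpos.ne']; ring

/-- s · I ≤ φ̄(s) on (0,1/2] for the Gallager-type function of a uniform-input
channel R from M to Z. -/
theorem s_mul_mutualInfo_le_phiBar
    {M Z : Type*} [Fintype M] [Fintype Z] [Nonempty M] [Nonempty Z]
    (R : M → Z → ℝ) (hRpos : ∀ m z, 0 < R m z) (hRsum : ∀ m, ∑ z : Z, R m z = 1)
    (RZ : Z → ℝ) (hRZ : ∀ z, RZ z = (1 / Fintype.card M : ℝ) * ∑ m : M, R m z)
    (I : ℝ)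
    (hI : I = ∑ m : M, ∑ z : Z,
      (1 / Fintype.card M : ℝ) * R m z * Real.log (R m z / RZ z))
    (φbar : ℝ → ℝ)
    (hφbar : ∀ s, φbar s = Real.log (∑ z : Z,
      ((1 / Fintype.card M : ℝ) * ∑ m : M, R m z ^ ((1 : ℝ) / (1 - s))) ^ (1 - s))) :
    ∀ s ∈ Set.Ioc (0 : ℝ) (1 / 2), s * I ≤ φbar s := by
  intro s hs
  obtain ⟨hs0, hs2⟩ := hs
  have hs1 : s < 1 := lt_of_le_of_lt hs2 (by norm_num)
  set lam : ℝ := 1 - s with hlam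
  have hlam0 : 0 < lam := by rw [hlam]; linarith
  set c : ℝ := (1 / Fintype.card M : ℝ) with hc
  have hNpos : (0:ℝ) < Fintype.card M := by
    exact_mod_cast Fintype.card_pos
  have hcpos : 0 < c := by rw [hc]; positivity
  have hQpos : ∀ z, 0 < RZ z := fun z => by
    rw [hRZ]
    exact mul_pos hcpos (Finset.sum_pos (fun m _ => hRpos m z) univ_nonempty)
  have hQsum : ∑ z : Z, RZ z = 1 := by
    calc ∑ z : Z, RZ z = ∑ z : Z, c * ∑ m : M, R m z := by
          apply Finset.sum_congr rfl; intro z _; rw [hRZ]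
      _ = c * ∑ m : M, ∑ z : Z, R m z := by
          rw [← Finset.mul_sum, Finset.sum_comm]
      _ = c * Fintype.card M := by simp [hRsum]
      _ = 1 := by rw [hc]; field_simp
  -- the inner averaged power
  set A : Z → ℝ := fun z => c * ∑ m : M, R m z ^ ((1:ℝ)/lam) with hA
  have hApos : ∀ z, 0 < A z := fun z => by
    simp only [hA]
    exact mul_pos hcpos (Finset.sum_pos
      (fun m _ => Real.rpow_pos_of_pos (hRpos m z) _) univ_nonempty)
  have hw1 : ∀ z, ∑ m : M, c * R m z / RZ z = 1 := fun z => by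
    rw [← Finset.sum_div, ← Finset.mul_sum, ← hRZ z]
    exact div_self (hQpos z).ne'
  -- Step 2 (inner Jensen): per-z lower bound on log (A z)
  have step2 : ∀ z, ∑ m : M, (c * R m z / RZ z) *
      Real.log (R m z ^ ((1:ℝ)/lam) * RZ z / R m z) ≤ Real.log (A z) := by
    intro z
    have hw : ∀ m, 0 < c * R m z / RZ z := fun m =>
      div_pos (mul_pos hcpos (hRpos m z)) (hQpos z)
    have hx : ∀ m, 0 < R m z ^ ((1:ℝ)/lam) * RZ z / R m z := fun m =>
      div_pos (mul_pos (Real.rpow_pos_of_pos (hRpos m z) _) (hQpos z)) (hRpos m z)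
    have h := jensen_log_aux _ _ hw (hw1 z) hx
    have hAz : ∑ m : M, (c * R m z / RZ z) *
        (R m z ^ ((1:ℝ)/lam) * RZ z / R m z) = A z := by
      simp only [hA]
      rw [Finset.mul_sum]
      apply Finset.sum_congr rfl
      intro m _
      field_simp [(hRpos m z).ne', (hQpos z).ne']
    rwa [hAz] at h
  -- the exact identity: s * I equals the double-Jensen lower bound
  have main_z : ∀ z, ∑ m : M, s * (c * R m z * Real.log (R m z / RZ z)) =
      RZ z * (lam * (∑ m : M, (c * R m z / RZ z) *
        Real.log (R m z ^ ((1:ℝ)/lam) * RZ z / R m z)) - Real.log (RZ z)) := by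
    intro z
    have h1s : (1:ℝ) - s ≠ 0 := by linarith
    have e0 : ∀ m, s * (c * R m z * Real.log (R m z / RZ z)) =
        RZ z * (lam * ((c * R m z / RZ z) *
          Real.log (R m z ^ ((1:ℝ)/lam) * RZ z / R m z))) -
        RZ z * Real.log (RZ z) * (c * R m z / RZ z) := by
      intro m
      rw [Real.log_div (hRpos m z).ne' (hQpos z).ne',
        Real.log_div (mul_pos (Real.rpow_pos_of_pos (hRpos m z) _) (hQpos z)).ne'
          (hRpos m z).ne',
        Real.log_mul (Real.rpow_pos_of_pos (hRpos m z) _).ne' (hQpos z).ne',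
        Real.log_rpow (hRpos m z), hlam]
      field_simp [h1s, (hQpos z).ne']
      ring
    have e1 : ∑ m : M, RZ z * (lam * ((c * R m z / RZ z) *
        Real.log (R m z ^ ((1:ℝ)/lam) * RZ z / R m z))) =
        RZ z * (lam * ∑ m : M, (c * R m z / RZ z) *
          Real.log (R m z ^ ((1:ℝ)/lam) * RZ z / R m z)) := by
      simp only [Finset.mul_sum]
    have e2 : ∑ m : M, RZ z * Real.log (RZ z) * (c * R m z / RZ z) =
        RZ z * Real.log (RZ z) := by
      rw [← Finset.mul_sum, hw1 z, mul_one]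
    rw [Finset.sum_congr rfl (fun m _ => e0 m), Finset.sum_sub_distrib, e1, e2,
      ← mul_sub]
  -- Step 1 (outer Jensen)
  have step1 : ∑ z : Z, RZ z * Real.log (A z ^ lam / RZ z) ≤
      Real.log (∑ z : Z, RZ z * (A z ^ lam / RZ z)) :=
    jensen_log_aux _ _ hQpos hQsum
      (fun z => div_pos (Real.rpow_pos_of_pos (hApos z) _) (hQpos z))
  have hsum_simp : ∑ z : Z, RZ z * (A z ^ lam / RZ z) = ∑ z : Z, A z ^ lam := by
    apply Finset.sum_congr rfl
    intro z _
    rw [mul_comm, div_mul_eq_mul_div, mul_div_assoc, div_self (hQpos z).ne',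
      mul_one]
  have hφ : φbar s = Real.log (∑ z : Z, A z ^ lam) := by
    rw [hφbar s, ← hlam]
  -- chain everything
  have chain : ∑ z : Z, RZ z * (lam * (∑ m : M, (c * R m z / RZ z) *
      Real.log (R m z ^ ((1:ℝ)/lam) * RZ z / R m z)) - Real.log (RZ z)) ≤
      ∑ z : Z, RZ z * Real.log (A z ^ lam / RZ z) := by
    apply Finset.sum_le_sum
    intro z _
    have hlog : Real.log (A z ^ lam / RZ z) =
        lam * Real.log (A z) - Real.log (RZ z) := by
      rw [Real.log_div (Real.rpow_pos_of_pos (hApos z) _).ne' (hQpos z).ne',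
        Real.log_rpow (hApos z)]
    rw [hlog]
    apply mul_le_mul_of_nonneg_left _ (hQpos z).le
    apply sub_le_sub_right
    exact mul_le_mul_of_nonneg_left (step2 z) hlam0.le
  have h0 : s * I = ∑ z : Z, ∑ m : M,
      s * (c * R m z * Real.log (R m z / RZ z)) := by
    rw [hI, Finset.sum_comm, Finset.mul_sum]
    apply Finset.sum_congr rfl
    intro z _
    rw [Finset.mul_sum]
  calc s * I = ∑ z : Z, ∑ m : M, s * (c * R m z * Real.log (R m z / RZ z)) := h0
    _ = ∑ z : Z, RZ z * (lam * (∑ m : M, (c * R m z / RZ z) *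
        Real.log (R m z ^ ((1:ℝ)/lam) * RZ z / R m z)) - Real.log (RZ z)) :=
        Finset.sum_congr rfl fun z _ => main_z z
    _ ≤ ∑ z : Z, RZ z * Real.log (A z ^ lam / RZ z) := chain
    _ ≤ Real.log (∑ z : Z, RZ z * (A z ^ lam / RZ z)) := step1
    _ = Real.log (∑ z : Z, A z ^ lam) := by rw [hsum_simp]
    _ = φbar s := hφ.symm
end

section
/- Let L, M, Z be nonempty finite sets, F a two-universal family of hash functions from L to M such that every f ∈ F satisfies |f⁻¹(m)| = |L|/|M| for all m ∈ M. Let Q : L → (Z → ℝ>0) be a strictly positive conditional probability kernel and let L be uniformly distributed on L. For f ∈ F let Q_{Z|f(L)}(z|m) = (|M|/|L|) Σ_{ℓ: f(ℓ)=m} Q(z|ℓ). Then for every 0 < s ≤ 1/2, with u = s/(1-s), the average over uniform f ∈ F of exp(φ̄(s, Q_{Z|f(L)})) is at most 1 + (|M|/|L|)^s exp(φ̄(s, Q)), where φ̄(s, R) = ln Σ_z ( average over inputs of R(z|·)^{1+u} )^{1/(1+u)} with the average taken uniformly over the input alphabet of R. -/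
/-!
Fix `z` and write `q ℓ = Q ℓ z` and `B m` for the `q`-mass of the fibre `f⁻¹(m)`. Then
`∑ₘ B m ^ (1 + u) = ∑ₗ q ℓ · B (f ℓ) ^ u`, and `B (f ℓ)` is `q ℓ` plus the mass of the other
inputs colliding with `ℓ`; subadditivity of `t ↦ t ^ u` separates the two. Averaged over `f`,
concavity of `t ↦ t ^ u` and two-universality bound the colliding mass by `(∑ q) / |M|`. Finally,
Jensen's inequality for the concave `t ↦ t ^ (1 / (1 + u))` moves the average over `f` inside, and
its subadditivity splits the bound into `(|M| / |L|) ^ s · exp φ̄(s, Q)` and the total mass `1`.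
-/

open Finset

def IsTwoUniversal {L M : Type*} [Fintype M] [DecidableEq M] (F : Finset (L → M)) : Prop :=
  ∀ x₁ x₂ : L, x₁ ≠ x₂ →
    ((F.filter (fun f => f x₁ = f x₂)).card : ℝ) / F.card ≤ 1 / Fintype.card M

theorem avg_rpow_le_rpow_avg {ι : Type*} {s : Finset ι} (hs : s.Nonempty) {x : ι → ℝ}
    (hx : ∀ i ∈ s, 0 ≤ x i) {p : ℝ} (hp0 : 0 ≤ p) (hp1 : p ≤ 1) :
    (1 / s.card : ℝ) * ∑ i ∈ s, x i ^ p ≤ ((1 / s.card : ℝ) * ∑ i ∈ s, x i) ^ p := by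
  have hw : ∑ _i ∈ s, (1 / s.card : ℝ) = 1 := by
    rw [sum_const, nsmul_eq_mul]
    field_simp [(Nat.cast_pos.mpr hs.card_pos).ne']
  simpa only [smul_eq_mul, mul_sum] using
    (Real.concaveOn_rpow hp0 hp1).le_map_sum (fun _ _ => by positivity) hw hx

theorem rpow_mul_add_rpow_one_add_rpow_le {x a b u : ℝ} (hx : 0 ≤ x) (ha : 0 ≤ a) (hb : 0 ≤ b)
    (hu : 0 ≤ u) :
    (x ^ u * a + b ^ (1 + u)) ^ (1 / (1 + u)) ≤ x ^ (u / (1 + u)) * a ^ (1 / (1 + u)) + b := by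
  have h1u : (0 : ℝ) < 1 + u := by linarith
  calc (x ^ u * a + b ^ (1 + u)) ^ (1 / (1 + u))
      ≤ (x ^ u * a) ^ (1 / (1 + u)) + (b ^ (1 + u)) ^ (1 / (1 + u)) :=
        Real.rpow_add_le_add_rpow (by positivity) (by positivity) (by positivity)
          ((div_le_one h1u).mpr (by linarith))
    _ = x ^ (u / (1 + u)) * a ^ (1 / (1 + u)) + b := by
        rw [Real.mul_rpow (by positivity) ha, ← Real.rpow_mul hx, ← Real.rpow_mul hb,
          mul_one_div, mul_one_div_cancel h1u.ne', Real.rpow_one]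

section Collisions

variable {L M : Type*} [Fintype L] [DecidableEq L] [DecidableEq M]

def collisionMass (f : L → M) (q : L → ℝ) (ℓ : L) : ℝ :=
  ∑ ℓ' ∈ (univ.erase ℓ).filter (fun ℓ' => f ℓ' = f ℓ), q ℓ'

theorem collisionMass_nonneg (f : L → M) {q : L → ℝ} (hq : ∀ ℓ, 0 ≤ q ℓ) (ℓ : L) :
    0 ≤ collisionMass f q ℓ :=
  sum_nonneg fun ℓ' _ => hq ℓ'

theorem sum_fiber_eq_add_collisionMass (f : L → M) (q : L → ℝ) (ℓ : L) :
    ∑ ℓ' ∈ univ.filter (fun ℓ' => f ℓ' = f ℓ), q ℓ' = q ℓ + collisionMass f q ℓ := by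
  rw [collisionMass, filter_erase, add_sum_erase _ _ (by simp)]

theorem sum_fiber_rpow_one_add_le [Fintype M] (f : L → M) {q : L → ℝ} (hq : ∀ ℓ, 0 ≤ q ℓ)
    {u : ℝ} (hu0 : 0 ≤ u) (hu1 : u ≤ 1) :
    ∑ m, (∑ ℓ ∈ univ.filter (fun ℓ => f ℓ = m), q ℓ) ^ (1 + u) ≤
      ∑ ℓ, q ℓ ^ (1 + u) + ∑ ℓ, q ℓ * collisionMass f q ℓ ^ u := by
  have h1u : (1 : ℝ) + u ≠ 0 := by linarith
  calc ∑ m, (∑ ℓ ∈ univ.filter (fun ℓ => f ℓ = m), q ℓ) ^ (1 + u)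
      = ∑ m, ∑ ℓ ∈ univ.filter (fun ℓ => f ℓ = m),
          q ℓ * (∑ ℓ' ∈ univ.filter (fun ℓ' => f ℓ' = f ℓ), q ℓ') ^ u := by
        refine sum_congr rfl fun m _ => ?_
        rw [Real.rpow_one_add' (sum_nonneg fun ℓ _ => hq ℓ) h1u, sum_mul]
        exact sum_congr rfl fun ℓ hℓ => by rw [(mem_filter.mp hℓ).2]
    _ = ∑ ℓ, q ℓ * (q ℓ + collisionMass f q ℓ) ^ u := by
        simp only [sum_fiberwise, sum_fiber_eq_add_collisionMass]
    _ ≤ ∑ ℓ, (q ℓ ^ (1 + u) + q ℓ * collisionMass f q ℓ ^ u) := by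
        refine sum_le_sum fun ℓ _ => ?_
        rw [Real.rpow_one_add' (hq ℓ) h1u, ← mul_add]
        exact mul_le_mul_of_nonneg_left (Real.rpow_add_le_add_rpow (hq ℓ)
          (collisionMass_nonneg f hq ℓ) hu0 hu1) (hq ℓ)
    _ = _ := sum_add_distrib

theorem avg_collisionMass_le [Fintype M] {F : Finset (L → M)} (huniv : IsTwoUniversal F)
    {q : L → ℝ} (hq : ∀ ℓ, 0 ≤ q ℓ) (ℓ : L) :
    (1 / F.card : ℝ) * ∑ f ∈ F, collisionMass f q ℓ ≤
      (1 / Fintype.card M : ℝ) * ∑ ℓ', q ℓ' := by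
  have hswap : ∑ f ∈ F, collisionMass f q ℓ =
      ∑ ℓ' ∈ univ.erase ℓ, ((F.filter fun f => f ℓ' = f ℓ).card : ℝ) * q ℓ' := by
    simp only [collisionMass, sum_filter]
    rw [sum_comm]
    exact sum_congr rfl fun ℓ' _ => by rw [← sum_filter, sum_const, nsmul_eq_mul]
  rw [hswap, mul_sum, mul_sum]
  calc ∑ ℓ' ∈ univ.erase ℓ, (1 / F.card : ℝ) * (((F.filter fun f => f ℓ' = f ℓ).card : ℝ) * q ℓ')
      ≤ ∑ ℓ' ∈ univ.erase ℓ, (1 / Fintype.card M : ℝ) * q ℓ' := by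
        refine sum_le_sum fun ℓ' hℓ' => ?_
        rw [← mul_assoc, one_div_mul_eq_div]
        exact mul_le_mul_of_nonneg_right (huniv ℓ' ℓ (ne_of_mem_erase hℓ')) (hq ℓ')
    _ ≤ ∑ ℓ', (1 / Fintype.card M : ℝ) * q ℓ' :=
        sum_le_sum_of_subset_of_nonneg (erase_subset _ _) fun ℓ' _ _ =>
          mul_nonneg (by positivity) (hq ℓ')

theorem avg_sum_fiber_rpow_one_add_le [Fintype M] {F : Finset (L → M)} (hF : F.Nonempty)
    (huniv : IsTwoUniversal F) {q : L → ℝ} (hq : ∀ ℓ, 0 ≤ q ℓ) {u : ℝ} (hu0 : 0 ≤ u) (hu1 : u ≤ 1) :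
    (1 / F.card : ℝ) * ∑ f ∈ F, ∑ m, (∑ ℓ ∈ univ.filter (fun ℓ => f ℓ = m), q ℓ) ^ (1 + u) ≤
      ∑ ℓ, q ℓ ^ (1 + u) + (∑ ℓ, q ℓ) * ((1 / Fintype.card M : ℝ) * ∑ ℓ, q ℓ) ^ u := by
  have hFc : (F.card : ℝ) ≠ 0 := (Nat.cast_pos.mpr hF.card_pos).ne'
  have hcoll : ∀ ℓ, (1 / F.card : ℝ) * ∑ f ∈ F, collisionMass f q ℓ ^ u ≤
      ((1 / Fintype.card M : ℝ) * ∑ ℓ, q ℓ) ^ u := fun ℓ =>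
    (avg_rpow_le_rpow_avg hF (fun f _ => collisionMass_nonneg f hq ℓ) hu0 hu1).trans
      (Real.rpow_le_rpow (mul_nonneg (by positivity)
        (sum_nonneg fun f _ => collisionMass_nonneg f hq ℓ))
        (avg_collisionMass_le huniv hq ℓ) hu0)
  calc (1 / F.card : ℝ) * ∑ f ∈ F, ∑ m, (∑ ℓ ∈ univ.filter (fun ℓ => f ℓ = m), q ℓ) ^ (1 + u)
      ≤ (1 / F.card : ℝ) * ∑ f ∈ F,
          (∑ ℓ, q ℓ ^ (1 + u) + ∑ ℓ, q ℓ * collisionMass f q ℓ ^ u) :=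
        mul_le_mul_of_nonneg_left
          (sum_le_sum fun f _ => sum_fiber_rpow_one_add_le f hq hu0 hu1) (by positivity)
    _ = ∑ ℓ, q ℓ ^ (1 + u) +
          ∑ ℓ, q ℓ * ((1 / F.card : ℝ) * ∑ f ∈ F, collisionMass f q ℓ ^ u) := by
        rw [sum_add_distrib, sum_const, nsmul_eq_mul, mul_add, ← mul_assoc, one_div_mul_cancel hFc,
          one_mul, sum_comm, mul_sum]
        congr 1
        refine sum_congr rfl fun ℓ _ => ?_
        simp only [mul_sum]
        exact sum_congr rfl fun f _ => mul_left_comm _ _ _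
    _ ≤ ∑ ℓ, q ℓ ^ (1 + u) + ∑ ℓ, q ℓ * ((1 / Fintype.card M : ℝ) * ∑ ℓ, q ℓ) ^ u := by
        gcongr with ℓ
        exacts [hq ℓ, hcoll ℓ]
    _ = _ := by rw [sum_mul]

end Collisions

section Kernels

variable {L M Z : Type*} [Fintype L] [Fintype M] [DecidableEq M]

/-- `exp φ̄(s, R)` for `u = s / (1 - s)`, the inputs of `R` being uniformly distributed. -/
noncomputable def expPhiBar [Fintype Z] {X : Type*} [Fintype X] (R : X → Z → ℝ) (u : ℝ) : ℝ :=
  ∑ z, ((1 / Fintype.card X : ℝ) * ∑ x, R x z ^ (1 + u)) ^ ((1 : ℝ) / (1 + u))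

/-- `Q_{Z|f(L)}` for uniformly distributed `L`. -/
noncomputable def hashedKernel (f : L → M) (Q : L → Z → ℝ) (m : M) (z : Z) : ℝ :=
  (Fintype.card M / Fintype.card L : ℝ) * ∑ ℓ ∈ univ.filter (fun ℓ => f ℓ = m), Q ℓ z

theorem expPhiBar_pos [Fintype Z] [Nonempty Z] {X : Type*} [Fintype X] {R : X → Z → ℝ}
    (hR : ∀ x z, 0 ≤ R x z) (hRpos : ∀ z, ∃ x, 0 < R x z) (u : ℝ) : 0 < expPhiBar R u := by
  refine sum_pos (fun z _ => Real.rpow_pos_of_pos ?_ _) univ_nonempty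
  obtain ⟨x, hx⟩ := hRpos z
  have : Nonempty X := ⟨x⟩
  exact mul_pos (by positivity) (sum_pos' (fun x _ => Real.rpow_nonneg (hR x z) _)
    ⟨x, mem_univ x, Real.rpow_pos_of_pos hx _⟩)

theorem hashedKernel_nonneg (f : L → M) {Q : L → Z → ℝ} (hQ : ∀ ℓ z, 0 ≤ Q ℓ z) (m : M) (z : Z) :
    0 ≤ hashedKernel f Q m z :=
  mul_nonneg (by positivity) (sum_nonneg fun ℓ _ => hQ ℓ z)

theorem hashedKernel_pos (f : L → M) {Q : L → Z → ℝ} (hQ : ∀ ℓ z, 0 < Q ℓ z) (ℓ : L) (z : Z) :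
    0 < hashedKernel f Q (f ℓ) z := by
  have : Nonempty L := ⟨ℓ⟩
  have : Nonempty M := ⟨f ℓ⟩
  exact mul_pos (by positivity) (sum_pos (fun ℓ' _ => hQ ℓ' z) ⟨ℓ, by simp⟩)

variable [Nonempty L] [Nonempty M]

theorem avg_mean_hashedKernel_rpow_le {F : Finset (L → M)} (hF : F.Nonempty)
    (huniv : IsTwoUniversal F) {Q : L → Z → ℝ} (hQ : ∀ ℓ z, 0 ≤ Q ℓ z) (z : Z) {u : ℝ} (hu0 : 0 ≤ u) (hu1 : u ≤ 1) :
    (1 / F.card : ℝ) * ∑ f ∈ F,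
        (1 / Fintype.card M : ℝ) * ∑ m, hashedKernel f Q m z ^ (1 + u) ≤
      ((Fintype.card M : ℝ) / Fintype.card L) ^ u *
          ((1 / Fintype.card L : ℝ) * ∑ ℓ, Q ℓ z ^ (1 + u)) +
        ((∑ ℓ, Q ℓ z) / Fintype.card L) ^ (1 + u) := by
  classical
  set k : ℝ := (Fintype.card M : ℝ)
  set n : ℝ := (Fintype.card L : ℝ)
  have hk : 0 < k := by positivity
  have hn : 0 < n := by positivity
  set S := ∑ ℓ, Q ℓ z
  have h1u : (1 : ℝ) + u ≠ 0 := by linarith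
  have hS : 0 ≤ S := sum_nonneg fun ℓ _ => hQ ℓ z
  have hscale : ∀ f : L → M, (1 / k) * ∑ m, hashedKernel f Q m z ^ (1 + u) =
      (1 / n) * (k / n) ^ u * ∑ m, (∑ ℓ ∈ univ.filter (fun ℓ => f ℓ = m), Q ℓ z) ^ (1 + u) := by
    intro f
    simp only [hashedKernel, k, n]
    rw [← sum_congr rfl fun m _ => (Real.mul_rpow (by positivity)
      (sum_nonneg fun ℓ _ => hQ ℓ z)).symm, ← mul_sum, ← mul_assoc,
      Real.rpow_one_add' (by positivity) h1u]
    field_simp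
  have hmix : (k / n) ^ u * ((1 / k) * S) ^ u = (S / n) ^ u := by
    rw [← Real.mul_rpow (by positivity) (by positivity)]
    congr 1
    field_simp
  rw [sum_congr rfl fun f _ => hscale f, ← mul_sum, mul_left_comm]
  calc (1 / n) * (k / n) ^ u * ((1 / F.card : ℝ) * ∑ f ∈ F,
          ∑ m, (∑ ℓ ∈ univ.filter (fun ℓ => f ℓ = m), Q ℓ z) ^ (1 + u))
      ≤ (1 / n) * (k / n) ^ u * (∑ ℓ, Q ℓ z ^ (1 + u) + S * ((1 / k) * S) ^ u) :=
        mul_le_mul_of_nonneg_left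
          (avg_sum_fiber_rpow_one_add_le hF huniv (fun ℓ => hQ ℓ z) hu0 hu1) (by positivity)
    _ = _ := by
        rw [Real.rpow_one_add' (by positivity) h1u, ← hmix]
        ring

theorem avg_expPhiBar_hashedKernel_le [Fintype Z] {F : Finset (L → M)} (hF : F.Nonempty)
    (huniv : IsTwoUniversal F)
    {Q : L → Z → ℝ} (hQ : ∀ ℓ z, 0 ≤ Q ℓ z) (hQsum : ∀ ℓ, ∑ z, Q ℓ z = 1)
    {u : ℝ} (hu0 : 0 ≤ u) (hu1 : u ≤ 1) :
    (1 / F.card : ℝ) * ∑ f ∈ F, expPhiBar (hashedKernel f Q) u ≤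
      1 + ((Fintype.card M : ℝ) / Fintype.card L) ^ (u / (1 + u)) * expPhiBar Q u := by
  set k : ℝ := (Fintype.card M : ℝ)
  set n : ℝ := (Fintype.card L : ℝ)
  have h1u : (0 : ℝ) < 1 + u := by linarith
  have hc0 : (0 : ℝ) ≤ 1 / (1 + u) := by positivity
  have hc1 : (1 : ℝ) / (1 + u) ≤ 1 := (div_le_one h1u).mpr (by linarith)
  have hmass : ∑ z, (∑ ℓ, Q ℓ z) / n = 1 := by
    rw [← sum_div, sum_comm]
    simp [hQsum, n]
  have hmean_nonneg : ∀ (f : L → M) (z : Z),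
      0 ≤ (1 / k) * ∑ m, hashedKernel f Q m z ^ (1 + u) := fun f z =>
    mul_nonneg (by positivity)
      (sum_nonneg fun m _ => Real.rpow_nonneg (hashedKernel_nonneg f hQ m z) _)
  calc (1 / F.card : ℝ) * ∑ f ∈ F, expPhiBar (hashedKernel f Q) u
      = ∑ z, (1 / F.card : ℝ) * ∑ f ∈ F,
          ((1 / k) * ∑ m, hashedKernel f Q m z ^ (1 + u)) ^ (1 / (1 + u)) := by
        simp only [expPhiBar]
        rw [sum_comm, mul_sum]
    _ ≤ ∑ z, ((1 / F.card : ℝ) * ∑ f ∈ F,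
          (1 / k) * ∑ m, hashedKernel f Q m z ^ (1 + u)) ^ (1 / (1 + u)) :=
        sum_le_sum fun z _ => avg_rpow_le_rpow_avg hF (fun f _ => hmean_nonneg f z) hc0 hc1
    _ ≤ ∑ z, ((k / n) ^ u * ((1 / n) * ∑ ℓ, Q ℓ z ^ (1 + u)) +
          ((∑ ℓ, Q ℓ z) / n) ^ (1 + u)) ^ (1 / (1 + u)) :=
        sum_le_sum fun z _ => Real.rpow_le_rpow
          (mul_nonneg (by positivity) (sum_nonneg fun f _ => hmean_nonneg f z))
          (avg_mean_hashedKernel_rpow_le hF huniv hQ z hu0 hu1) hc0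
    _ ≤ ∑ z, ((k / n) ^ (u / (1 + u)) * ((1 / n) * ∑ ℓ, Q ℓ z ^ (1 + u)) ^ (1 / (1 + u)) +
          (∑ ℓ, Q ℓ z) / n) :=
        sum_le_sum fun z _ => rpow_mul_add_rpow_one_add_rpow_le (by positivity)
          (mul_nonneg (by positivity) (sum_nonneg fun ℓ _ => Real.rpow_nonneg (hQ ℓ z) _))
          (div_nonneg (sum_nonneg fun ℓ _ => hQ ℓ z) (by positivity)) hu0
    _ = 1 + (k / n) ^ (u / (1 + u)) * expPhiBar Q u := by
        rw [sum_add_distrib, hmass, ← mul_sum, add_comm]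
        rfl

end Kernels

theorem avg_exp_phiBar_hashed_le_general
    {L M Z : Type*} [Fintype L] [Fintype M] [Fintype Z]
    [Nonempty L] [Nonempty M] [Nonempty Z] [DecidableEq M]
    (F : Finset (L → M)) (hF : F.Nonempty)
    (huniv : ∀ x₁ x₂ : L, x₁ ≠ x₂ →
      ((F.filter (fun f => f x₁ = f x₂)).card : ℝ) / F.card ≤ 1 / Fintype.card M)
    (Q : L → Z → ℝ) (hQpos : ∀ ℓ z, 0 < Q ℓ z) (hQsum : ∀ ℓ, ∑ z : Z, Q ℓ z = 1)
    (s : ℝ) (hs0 : 0 < s) (hs1 : s ≤ 1 / 2)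
    (u : ℝ) (hu : u = s / (1 - s)) :
    (1 / F.card : ℝ) *
        ∑ f ∈ F, Real.exp (Real.log (∑ z : Z,
          ((1 / Fintype.card M : ℝ) * ∑ m : M,
              ((Fintype.card M / Fintype.card L : ℝ) *
                ∑ ℓ ∈ univ.filter (fun ℓ : L => f ℓ = m), Q ℓ z) ^ (1 + u))
            ^ ((1 : ℝ) / (1 + u)))) ≤
      1 + ((Fintype.card M : ℝ) / Fintype.card L) ^ s *
        Real.exp (Real.log (∑ z : Z,
          ((1 / Fintype.card L : ℝ) * ∑ ℓ : L, Q ℓ z ^ (1 + u))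
            ^ ((1 : ℝ) / (1 + u)))) := by
  have h1s : 0 < 1 - s := by linarith
  have hu0 : 0 ≤ u := by rw [hu]; positivity
  have hu1 : u ≤ 1 := by rw [hu, div_le_one h1s]; linarith
  have hs : u / (1 + u) = s := by rw [hu]; field_simp; ring
  have hQ : ∀ ℓ z, 0 ≤ Q ℓ z := fun ℓ z => (hQpos ℓ z).le
  have hpos : ∀ f : L → M, 0 < expPhiBar (hashedKernel f Q) u := fun f =>
    expPhiBar_pos (hashedKernel_nonneg f hQ) (fun z =>
      ⟨f (Classical.arbitrary L), hashedKernel_pos f hQpos _ z⟩) u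
  show (1 / F.card : ℝ) * ∑ f ∈ F, Real.exp (Real.log (expPhiBar (hashedKernel f Q) u)) ≤
    1 + ((Fintype.card M : ℝ) / Fintype.card L) ^ s * Real.exp (Real.log (expPhiBar Q u))
  rw [sum_congr rfl fun f _ => Real.exp_log (hpos f), ← hs,
    Real.exp_log (expPhiBar_pos hQ (fun z => ⟨Classical.arbitrary L, hQpos _ z⟩) u)]
  exact avg_expPhiBar_hashedKernel_le hF huniv hQ hQsum hu0 hu1

/-- The core chain of inequalities in the new privacy amplification theorem:
the average over a regular two-universal hash family of exp(φ̄(s, Q_{Z|f(L)}))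
is at most 1 + (|M|/|L|)^s · exp(φ̄(s, Q)). -/
theorem avg_exp_phiBar_hashed_le
    {L M Z : Type*} [Fintype L] [Fintype M] [Fintype Z]
    [Nonempty L] [Nonempty M] [Nonempty Z] [DecidableEq L] [DecidableEq M]
    (F : Finset (L → M)) (hF : F.Nonempty)
    (huniv : ∀ x₁ x₂ : L, x₁ ≠ x₂ →
      ((F.filter (fun f => f x₁ = f x₂)).card : ℝ) / F.card ≤ 1 / Fintype.card M)
    (hreg : ∀ f ∈ F, ∀ m : M,
      (univ.filter (fun ℓ : L => f ℓ = m)).card * Fintype.card M = Fintype.card L)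
    (Q : L → Z → ℝ) (hQpos : ∀ ℓ z, 0 < Q ℓ z) (hQsum : ∀ ℓ, ∑ z : Z, Q ℓ z = 1)
    (s : ℝ) (hs0 : 0 < s) (hs1 : s ≤ 1 / 2)
    (u : ℝ) (hu : u = s / (1 - s)) :
    (1 / F.card : ℝ) *
        ∑ f ∈ F, Real.exp (Real.log (∑ z : Z,
          ((1 / Fintype.card M : ℝ) * ∑ m : M,
              ((Fintype.card M / Fintype.card L : ℝ) *
                ∑ ℓ ∈ univ.filter (fun ℓ : L => f ℓ = m), Q ℓ z) ^ (1 + u))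
            ^ ((1 : ℝ) / (1 + u)))) ≤
      1 + ((Fintype.card M : ℝ) / Fintype.card L) ^ s *
        Real.exp (Real.log (∑ z : Z,
          ((1 / Fintype.card L : ℝ) * ∑ ℓ : L, Q ℓ z ^ (1 + u))
            ^ ((1 : ℝ) / (1 + u)))) :=
  avg_exp_phiBar_hashed_le_general F hF huniv Q hQpos hQsum s hs0 hs1 u hu
end
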